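/- arXiv:2202.12038 — 5 statements merged into one kernel-verified Lean document; each statement's English description precedes it below -/
import Mathlib

section
/- Assume α ≥ 5, (s, σ, w, η, x, u) ∈ Δ, y ∈ Σ_k with y ≠ x, and (r, β) ∈ Π(s, σ, w, η, x, u, y). If r^β is a suffix of the word ηxuy, then there exists a prefix η̄ of η such that (s, σ, w, η̄, x, uy) ∈ Δ. -/
/-!
Since `uy` is `α`-power free, the power `r^β` is longer than `uy`, so it ends with `xuy`.
The letter `x` occurs neither in `u` nor as `y`, so the period `|r|` cannot be shorter than
`xuy`; periodicity then copies `xuy` one period to the left, i.e. `η = η̄ xuy z` with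
`|xuy z| = |r|`. Now `sσwη̄xuy` is a prefix of `sσwηxu`, hence `α`-power free, and as
`β ≥ 5` gives `|η| ≤ 5 |η̄|`, the loss from `η` to `η̄` is absorbed by the factor `α` by which
the bound in `Γ` drops when `u` grows by one letter.
-/

namespace PowerFreeFormalization

variable {A : Type*}

/-- `p` is the `β`-power `r^β` of the nonempty word `r`:
`|p| = β * |r|` and `p` is a prefix of `r r r ⋯`. -/
def IsPow (r p : List A) (β : ℚ) : Prop :=
  r ≠ [] ∧ (p.length : ℚ) = β * r.length ∧
    p <+: (List.replicate p.length r).flatten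

/-- A finite word `w` is `α`-power free: no factor of `w` is an `r^β` with `β ≥ α`. -/
def PowFree (α : ℚ) (w : List A) : Prop :=
  ∀ (r p : List A) (β : ℚ), α ≤ β → IsPow r p β → ¬ p <:+: w

/-- `p` is a finite factor of the right-infinite word `f : ℕ → A`, occurring at position `i`. -/
def OccursR (f : ℕ → A) (p : List A) (i : ℕ) : Prop :=
  p = (List.range p.length).map fun j => f (i + j)

/-- `p` is a finite factor of the right-infinite word `f`. -/
def FactorR (f : ℕ → A) (p : List A) : Prop :=
  ∃ i : ℕ, OccursR f p i

/-- A left-infinite word is `g : ℕ → A`, where `g 0` is the rightmost letter,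
`g 1` the one before it, etc.  `p` occurs in `g` ending at offset `i` from the
right end (offset `0` means `p` is a suffix). -/
def OccursL (g : ℕ → A) (p : List A) (i : ℕ) : Prop :=
  p.reverse = (List.range p.length).map fun j => g (i + j)

/-- `p` is a finite factor of the left-infinite word `g`. -/
def FactorL (g : ℕ → A) (p : List A) : Prop :=
  ∃ i : ℕ, OccursL g p i

/-- `p` is a suffix of the left-infinite word `g`. -/
def SuffixL (g : ℕ → A) (p : List A) : Prop :=
  OccursL g p 0

/-- `p` is a finite factor of the bi-infinite word `h : ℤ → A`, at position `i`. -/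
def OccursZ (h : ℤ → A) (p : List A) (i : ℤ) : Prop :=
  p = (List.range p.length).map fun j => h (i + j)

/-- `p` is a finite factor of the bi-infinite word `h`. -/
def FactorZ (h : ℤ → A) (p : List A) : Prop :=
  ∃ i : ℤ, OccursZ h p i

/-- A right-infinite word is `α`-power free iff all its finite factors are. -/
def PowFreeR (α : ℚ) (f : ℕ → A) : Prop :=
  ∀ p, FactorR f p → PowFree α p

/-- A left-infinite word is `α`-power free iff all its finite factors are. -/
def PowFreeL (α : ℚ) (g : ℕ → A) : Prop :=
  ∀ p, FactorL g p → PowFree α p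

/-- A bi-infinite word is `α`-power free iff all its finite factors are. -/
def PowFreeZ (α : ℚ) (h : ℤ → A) : Prop :=
  ∀ p, FactorZ h p → PowFree α p

/-- Appending a finite word `u` on the right end of a left-infinite word `g`,
yielding the left-infinite word `g u`. -/
def appendL (g : ℕ → A) (u : List A) : ℕ → A :=
  fun n => u.reverse.getD n (g (n - u.length))

/-- `p` is a recurrent factor of the right-infinite word `f`
(infinitely many occurrences). -/
def RecR (f : ℕ → A) (p : List A) : Prop :=
  ∀ N : ℕ, ∃ i, N ≤ i ∧ OccursR f p i

/-- `p` is a recurrent factor of the left-infinite word `g`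
(infinitely many occurrences). -/
def RecL (g : ℕ → A) (p : List A) : Prop :=
  ∀ N : ℕ, ∃ i, N ≤ i ∧ OccursL g p i

/-- `p` is a recurrent factor of the bi-infinite word `h`
(infinitely many occurrences). -/
def RecZ (h : ℤ → A) (p : List A) : Prop :=
  {i : ℤ | OccursZ h p i}.Infinite

/-- The bi-infinite word `g m f` obtained by concatenating a left-infinite word `g`,
a finite word `m` (starting at index `0`) and a right-infinite word `f`. -/
def biJoin (g : ℕ → A) (m : List A) (f : ℕ → A) : ℤ → A :=
  fun i => if i < 0 then g (-(i + 1)).toNat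
    else m.getD i.toNat (f (i.toNat - m.length))

/-- The set `Γ`:  triples `(w, η, u)` with `w` nonempty and, whenever `|u| ≤ |w|`,
`|η| ≥ (α+1)·α^(|w|-|u|)·|w|`. -/
def Gamma (α : ℚ) (w η u : List A) : Prop :=
  w ≠ [] ∧ (u.length ≤ w.length →
    (α + 1) * α ^ (w.length - u.length) * (w.length : ℚ) ≤ (η.length : ℚ))

/-- The set `Δ`: 6-tuples `(s, σ, w, η, x, u)` with `s` left-infinite, `w` nonempty,
such that `sσwηxu` is `α`-power free, `(w,η,u) ∈ Γ`, `w` occurs exactly once in `sσw`,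
and `x` is not a factor of `s` nor of `u`. -/
def Delta (α : ℚ) (s : ℕ → A) (σ w η : List A) (x : A) (u : List A) : Prop :=
  w ≠ [] ∧
  PowFreeL α (appendL s (σ ++ w ++ η ++ [x] ++ u)) ∧
  Gamma α w η u ∧
  (∃! i : ℕ, OccursL (appendL s (σ ++ w)) w i) ∧
  ¬ FactorL s [x] ∧ ¬ [x] <:+: u

/-- `(r, β) ∈ Π(s, σ, w, η, x, u, y)`:  `r` nonempty, `β > α` rational, `uy` is
`α`-power free and `r^β` is a suffix of the left-infinite word `sσwηxuy`. -/
def PiCond (α : ℚ) (s : ℕ → A) (σ w η : List A) (x : A) (u : List A) (y : A)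
    (r : List A) (β : ℚ) : Prop :=
  r ≠ [] ∧ α < β ∧ PowFree α (u ++ [y]) ∧
  ∃ p : List A, IsPow r p β ∧ SuffixL (appendL s (σ ++ w ++ η ++ [x] ++ u ++ [y])) p

lemma PowFree.length_lt_of_isSuffix {α β : ℚ} {t r p l : List A} (hfree : PowFree α t)
    (hp : IsPow r p β) (hβ : α ≤ β) (hpl : p <:+ l) (htl : t <:+ l) : t.length < p.length := by
  by_contra! h
  exact hfree r p β hβ hp (List.suffix_of_suffix_length_le hpl htl h).isInfix

lemma IsPow.mul_length_le {r p : List A} {β : ℚ} {n : ℕ} (h : IsPow r p β) (hn : (n : ℚ) ≤ β) :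
    n * r.length ≤ p.length := by
  have : (n : ℚ) * r.length ≤ p.length := by
    rw [h.2.1]; exact mul_le_mul_of_nonneg_right hn (Nat.cast_nonneg _)
  exact_mod_cast this

lemma IsPow.drop_eq_take {r p : List A} {β : ℚ} (h : IsPow r p β) :
    p.drop r.length = p.take (p.length - r.length) := by
  obtain ⟨hr, -, hpre⟩ := h
  cases hn : p.length with
  | zero => simp [List.length_eq_zero_iff.mp hn]
  | succ n =>
    rw [hn] at hpre
    have hdrop : p.drop r.length <+: (List.replicate n r).flatten := by
      simpa [List.replicate_succ] using hpre.drop r.length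
    have htake : p.take (n + 1 - r.length) <+: (List.replicate n r).flatten := by
      have hpre' : p <+: (List.replicate n r).flatten ++ r := by
        simpa [List.replicate_succ'] using hpre
      refine List.prefix_of_prefix_length_le ((List.take_prefix _ p).trans hpre')
        (List.prefix_append _ _) ?_
      have := List.length_pos_iff.mpr hr
      simp only [List.length_take, List.length_flatten, List.map_replicate, List.sum_replicate,
        smul_eq_mul]
      have : n ≤ n * r.length := Nat.le_mul_of_pos_right n this
      omega
    exact (List.prefix_of_prefix_length_le hdrop htake (by simp [hn])).eq_of_length (by simp [hn])

lemma length_lt_of_drop_eq_take {p t : List A} {q : ℕ} {x : A} (hq : 0 < q)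
    (hper : p.drop q = p.take (p.length - q)) (hv : x :: t <:+ p) (hx : x ∉ t) :
    t.length < q := by
  by_contra! hqt
  obtain ⟨c, rfl⟩ := hv
  -- the `x` at position `|c|` would reappear `q` letters later, inside `t`
  have hidx := congrArg (·[c.length]?) hper
  simp only [List.getElem?_drop, List.getElem?_take, List.length_append, List.length_cons] at hidx
  rw [if_pos (by omega), List.getElem?_append_right (by omega), List.getElem?_append_right le_rfl,
    show q + c.length - c.length = (q - 1) + 1 by omega] at hidx
  simp only [Nat.sub_self, List.getElem?_cons_zero, List.getElem?_cons_succ] at hidx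
  exact hx (List.mem_of_getElem? hidx)

lemma IsPow.exists_eq_append_of_suffix {r p t : List A} {β : ℚ} {x : A} (h : IsPow r p β)
    (hβ : 2 ≤ β) (hv : x :: t <:+ p) (hx : x ∉ t) :
    ∃ p₁ z, p = p₁ ++ x :: t ++ z ++ x :: t ∧ (x :: t ++ z).length = r.length := by
  have hper := h.drop_eq_take
  have ht := length_lt_of_drop_eq_take (List.length_pos_iff.mpr h.1) hper hv hx
  have h2 := h.mul_length_le (n := 2) (by exact_mod_cast hβ)
  obtain ⟨p₁, hp₁⟩ : x :: t <:+ p.take (p.length - r.length) := by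
    rw [← hper]
    exact List.suffix_of_suffix_length_le hv (List.drop_suffix _ _) (by simp; omega)
  obtain ⟨z, hz⟩ : x :: t <:+ p.drop (p.length - r.length) :=
    List.suffix_of_suffix_length_le hv (List.drop_suffix _ _) (by simp; omega)
  refine ⟨p₁, z, ?_, ?_⟩
  · calc p = p.take (p.length - r.length) ++ p.drop (p.length - r.length) :=
          (List.take_append_drop _ _).symm
      _ = _ := by rw [← hp₁, ← hz]; simp
  · have := congrArg List.length hz
    simp only [List.length_append, List.length_drop, List.length_cons] at this ⊢
    omega

lemma appendL_append_add_length (s : ℕ → A) (t c : List A) (n : ℕ) :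
    appendL s (t ++ c) (n + c.length) = appendL s t n := by
  unfold appendL
  rw [List.reverse_append, List.getD_append_right _ _ _ _ (by simp)]
  simp only [List.length_reverse, List.length_append, Nat.add_sub_cancel]
  congr 2
  omega

lemma PowFreeL.of_appendL_append {α : ℚ} {s : ℕ → A} {t c : List A}
    (h : PowFreeL α (appendL s (t ++ c))) : PowFreeL α (appendL s t) := by
  rintro q ⟨i, hi⟩
  refine h q ⟨i + c.length, hi.trans (List.map_congr_left fun j _ => ?_)⟩
  rw [Nat.add_right_comm, appendL_append_add_length]

lemma Gamma.append_singleton {α : ℚ} {w η η' u : List A} (y : A) (hα : 0 < α)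
    (h : Gamma α w η u) (hlen : (η.length : ℚ) ≤ α * η'.length) :
    Gamma α w η' (u ++ [y]) := by
  refine ⟨h.1, fun hle => ?_⟩
  rw [List.length_append, List.length_singleton] at hle
  have hη := h.2 (by omega)
  rw [show w.length - u.length = w.length - (u.length + 1) + 1 by omega, pow_succ] at hη
  rw [List.length_append, List.length_singleton]
  refine le_of_mul_le_mul_left (hη.trans_eq' ?_ |>.trans hlen) hα
  ring

theorem statement4_general (k : ℕ) (α : ℚ) (hα : 5 ≤ α)
    (s : ℕ → Fin k) (σ w η u : List (Fin k)) (x y : Fin k)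
    (r : List (Fin k)) (β : ℚ)
    (hΔ : Delta α s σ w η x u) (hyx : y ≠ x)
    (hPi : PiCond α s σ w η x u y r β)
    (hsuf : ∃ p : List (Fin k), IsPow r p β ∧ p <:+ (η ++ [x] ++ u ++ [y])) :
    ∃ η' : List (Fin k), η' <+: η ∧ Delta α s σ w η' x (u ++ [y]) := by
  obtain ⟨hw, hfree, hΓ, hunique, hxs, hxu⟩ := hΔ
  obtain ⟨-, hαβ, hfree_uy, -⟩ := hPi
  obtain ⟨p, hp, a, hap⟩ := hsuf
  have hx : x ∉ u ++ [y] := by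
    rw [List.singleton_infix_iff] at hxu
    simpa [hxu] using hyx.symm
  simp only [List.append_assoc, List.cons_append, List.nil_append] at hap hfree
  have hv : x :: (u ++ [y]) <:+ p := by
    have := hfree_uy.length_lt_of_isSuffix hp hαβ.le ⟨a, hap⟩ ⟨η ++ [x], by simp⟩
    exact List.suffix_of_suffix_length_le ⟨η, rfl⟩ ⟨a, hap⟩ (by simpa using this)
  obtain ⟨p₁, z, rfl, hz⟩ := hp.exists_eq_append_of_suffix (by linarith) hv hx
  have hη : η = a ++ p₁ ++ (x :: (u ++ [y]) ++ z) :=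
    List.append_cancel_right (bs := x :: (u ++ [y])) (by rw [← hap]; simp)
  have h5 := hp.mul_length_le (n := 5) (by norm_num; linarith)
  refine ⟨a ++ p₁, ⟨_, hη.symm⟩, hw, ?_, hΓ.append_singleton y (by linarith) ?_, hunique, hxs,
    (List.singleton_infix_iff _ _).not.mpr hx⟩
  · rw [hη] at hfree
    exact PowFreeL.of_appendL_append (c := z ++ x :: u) (by simpa using hfree)
  · have hlen : η.length ≤ 5 * (a ++ p₁).length := by
      rw [hη]
      simp only [List.length_append, List.length_cons] at hz h5 ⊢
      omega
    calc (η.length : ℚ) ≤ 5 * (a ++ p₁).length := by exact_mod_cast hlen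
      _ ≤ α * (a ++ p₁).length := by gcongr

/-- Proposition: if `(s,σ,w,η,x,u) ∈ Δ`, `y ≠ x`,
`(r,β) ∈ Π(s,σ,w,η,x,u,y)` and `r^β` is a suffix of `ηxuy`, then there is a prefix
`η̄` of `η` with `(s,σ,w,η̄,x,uy) ∈ Δ`. -/
theorem statement4 (k : ℕ) (hk : 3 ≤ k) (α : ℚ) (hα : 5 ≤ α)
    (s : ℕ → Fin k) (σ w η u : List (Fin k)) (x y : Fin k)
    (r : List (Fin k)) (β : ℚ)
    (hΔ : Delta α s σ w η x u) (hyx : y ≠ x)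
    (hPi : PiCond α s σ w η x u y r β)
    (hsuf : ∃ p : List (Fin k), IsPow r p β ∧ p <:+ (η ++ [x] ++ u ++ [y])) :
    ∃ η' : List (Fin k), η' <+: η ∧ Delta α s σ w η' x (u ++ [y]) :=
  statement4_general k α hα s σ w η u x y r β hΔ hyx hPi hsuf

end PowerFreeFormalization
end

section
/- Assume α ≥ 5, (s, σ, w, η, x, u) ∈ Δ, y ∈ Σ_k with y ≠ x, and (r, β) ∈ Π(s, σ, w, η, x, u, y). If |r| ≤ |w| and |u| ≤ |w|, then r^β is a suffix of the word ηxuy. -/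
/-!
Deleting the last letter `y` from `p = r^β` leaves a prefix of a power of `r` that is a suffix
of the `α`-power free word `sσwηxu`; hence `|p| - 1 < α|r| ≤ α|w|`. The condition `Γ` gives
`|η| ≥ (α + 1)|w| ≥ α|w| + 1`, so `p` is shorter than `η`, and being a suffix of the same
left-infinite word as `ηxuy`, it is a suffix of `ηxuy`.
-/

namespace PowerFreeFormalization

variable {A : Type*}

theorem occursL_appendL_concat_succ (g : ℕ → A) (L : List A) (a : A) (q : List A) (i : ℕ) :
    OccursL (appendL g (L ++ [a])) q (i + 1) ↔ OccursL (appendL g L) q i := by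
  have hshift : ∀ j, appendL g (L ++ [a]) (i + 1 + j) = appendL g L (i + j) := fun j => by
    rw [show i + 1 + j = i + j + 1 by omega]
    simp [appendL]
  simp only [OccursL, hshift]

theorem OccursL.dropLast {g : ℕ → A} {p : List A} {i : ℕ} (h : OccursL g p i) :
    OccursL g p.dropLast (i + 1) := by
  unfold OccursL at h ⊢
  rw [← List.tail_reverse, h, List.length_dropLast, ← List.map_tail, List.tail_range,
    List.range'_eq_map_range, List.map_map]
  simp only [Function.comp_def, Nat.add_assoc, Nat.add_comm 1]

theorem SuffixL.dropLast_of_concat {g : ℕ → A} {L : List A} {a : A} {p : List A}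
    (h : SuffixL (appendL g (L ++ [a])) p) : SuffixL (appendL g L) p.dropLast :=
  (occursL_appendL_concat_succ g L a _ 0).mp (OccursL.dropLast h)

theorem suffixL_appendL_of_suffix (g : ℕ → A) {M L : List A} (h : M <:+ L) :
    SuffixL (appendL g L) M := by
  have hpre : M.reverse <+: L.reverse := List.reverse_prefix.mpr h
  apply List.ext_getElem (by simp)
  intro i hiM _
  have hiL : i < L.reverse.length := lt_of_lt_of_le hiM hpre.length_le
  simp only [List.getElem_map, List.getElem_range, Nat.zero_add, appendL,
    List.getD_eq_getElem _ _ hiL]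
  exact hpre.getElem hiM

theorem SuffixL.suffix_of_length_le {g : ℕ → A} {p M : List A} (hp : SuffixL g p)
    (hM : SuffixL g M) (hlen : p.length ≤ M.length) : p <:+ M := by
  apply List.reverse_prefix.mp
  unfold SuffixL OccursL at hp hM
  rw [hp, hM, ← min_eq_left hlen, ← List.take_range]
  exact (List.take_prefix _ _).map _

theorem IsPow.of_prefix {r p q : List A} {β : ℚ} (hp : IsPow r p β) (hq : q <+: p) :
    IsPow r q (q.length / r.length) := by
  obtain ⟨hr, -, hpre⟩ := hp
  have hrpos : 0 < r.length := List.length_pos_iff.mpr hr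
  refine ⟨hr, by field_simp, ?_⟩
  have hle : q.length ≤ p.length := hq.length_le
  have hflat : (List.replicate q.length r).flatten <+: (List.replicate p.length r).flatten :=
    ⟨(List.replicate (p.length - q.length) r).flatten, by
      rw [← List.flatten_append, ← List.replicate_add, Nat.add_sub_cancel' hle]⟩
  refine List.prefix_of_prefix_length_le (hq.trans hpre) hflat ?_
  simpa [List.length_flatten, List.sum_replicate] using Nat.le_mul_of_pos_right _ hrpos

theorem PowFreeL.length_lt_of_isPow {α : ℚ} {g : ℕ → A} {r q : List A} {γ : ℚ}
    (hg : PowFreeL α g) (hq : FactorL g q) (hpow : IsPow r q γ) :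
    (q.length : ℚ) < α * r.length := by
  have hγ : γ < α := by
    by_contra! hαγ
    exact hg q hq r q γ hαγ hpow (List.infix_refl q)
  have hrpos : (0 : ℚ) < r.length := by exact_mod_cast List.length_pos_iff.mpr hpow.1
  rw [hpow.2.1]
  exact mul_lt_mul_of_pos_right hγ hrpos

theorem Gamma.mul_length_add_one_le {α : ℚ} {w η u : List A} (hα : 1 ≤ α)
    (h : Gamma α w η u) (hu : u.length ≤ w.length) :
    α * w.length + 1 ≤ η.length := by
  have hw : (1 : ℚ) ≤ w.length := by exact_mod_cast List.length_pos_iff.mpr h.1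
  have hpow : (1 : ℚ) ≤ α ^ (w.length - u.length) := one_le_pow₀ hα
  calc α * w.length + 1 ≤ (α + 1) * 1 * w.length := by linarith
    _ ≤ (α + 1) * α ^ (w.length - u.length) * w.length := by gcongr
    _ ≤ η.length := h.2 hu

theorem statement5_general (k : ℕ) (α : ℚ) (hα : 5 ≤ α)
    (s : ℕ → Fin k) (σ w η u : List (Fin k)) (x y : Fin k)
    (r : List (Fin k)) (β : ℚ)
    (hΔ : Delta α s σ w η x u)
    (hPi : PiCond α s σ w η x u y r β)
    (hr : r.length ≤ w.length) (hu : u.length ≤ w.length) :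
    ∃ p : List (Fin k), IsPow r p β ∧ p <:+ (η ++ [x] ++ u ++ [y]) := by
  obtain ⟨-, hfree, hΓ, -, -, -⟩ := hΔ
  obtain ⟨-, -, -, p, hpow, hsuf⟩ := hPi
  refine ⟨p, hpow, ?_⟩
  have hinit : (p.dropLast.length : ℚ) < α * r.length :=
    hfree.length_lt_of_isPow ⟨0, SuffixL.dropLast_of_concat hsuf⟩
      (hpow.of_prefix p.dropLast_prefix)
  have hη := hΓ.mul_length_add_one_le (by linarith) hu
  have hrw : α * r.length ≤ α * w.length := by gcongr
  have hlen : p.length ≤ p.dropLast.length + 1 := by simp only [List.length_dropLast]; omega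
  refine hsuf.suffix_of_length_le (suffixL_appendL_of_suffix _ ⟨σ ++ w, by simp⟩) ?_
  have hpη : p.length < η.length := by
    have : (p.length : ℚ) < η.length := calc
      (p.length : ℚ) ≤ p.dropLast.length + 1 := by exact_mod_cast hlen
      _ < η.length := by linarith
    exact_mod_cast this
  simp only [List.length_append, List.length_singleton]
  omega

/-- Lemma: if `(s,σ,w,η,x,u) ∈ Δ`, `y ≠ x`,
`(r,β) ∈ Π(s,σ,w,η,x,u,y)`, `|r| ≤ |w|` and `|u| ≤ |w|`, then `r^β` is a suffix
of `ηxuy`. -/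
theorem statement5 (k : ℕ) (hk : 3 ≤ k) (α : ℚ) (hα : 5 ≤ α)
    (s : ℕ → Fin k) (σ w η u : List (Fin k)) (x y : Fin k)
    (r : List (Fin k)) (β : ℚ)
    (hΔ : Delta α s σ w η x u) (hyx : y ≠ x)
    (hPi : PiCond α s σ w η x u y r β)
    (hr : r.length ≤ w.length) (hu : u.length ≤ w.length) :
    ∃ p : List (Fin k), IsPow r p β ∧ p <:+ (η ++ [x] ++ u ++ [y]) :=
  statement5_general k α hα s σ w η u x y r β hΔ hPi hr hu

end PowerFreeFormalization
end

section
/- Assume α ≥ 5, (s, σ, w, η, x, u) ∈ Δ, y ∈ Σ_k with y ≠ x, and (r, β) ∈ Π(s, σ, w, η, x, u, y). If r^β is not a suffix of the word ηxuy, then |r| > |w|. -/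
/-!
Suppose `|r| ≤ |w|`. As `r^β` is not a suffix of `ηxuy`, it is longer than `ηxuy`. Its period
`|r|` exceeds `|u| + 1`, for otherwise the period would copy the letter `x` into `uy`, which avoids
`x`. Hence `|u| < |w|`, and the condition defining `Γ` gives `|η| ≥ (α + 1)|w| ≥ (α + 1)|r|`.
Cutting `xuy` off `r^β` leaves a power of `r` of length more than `|η|`, so of exponent more
than `α + 1`, and it is a factor of the `α`-power-free word `sσwηxu`.
-/

namespace PowerFreeFormalization

variable {A : Type*}

lemma flatten_replicate_prefix_of_le {m n : ℕ} (h : m ≤ n) (r : List A) :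
    (List.replicate m r).flatten <+: (List.replicate n r).flatten :=
  (List.prefix_replicate_iff.mpr ⟨by simpa using h, by simp⟩).flatten

lemma flatten_replicate_drop_length_prefix (n : ℕ) (r : List A) :
    ((List.replicate n r).flatten).drop r.length <+: (List.replicate n r).flatten := by
  cases n with
  | zero => simp
  | succ n =>
    rw [List.replicate_succ, List.flatten_cons, List.drop_left]
    simpa [List.replicate_succ] using flatten_replicate_prefix_of_le n.le_succ r

namespace IsPow

variable {r p : List A} {β : ℚ}

lemma take (hp : IsPow r p β) (m : ℕ) :
    IsPow r (p.take m) ((p.take m).length / r.length) := by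
  obtain ⟨hr, -, hpre⟩ := hp
  have hr0 : (r.length : ℚ) ≠ 0 := by simpa using hr
  refine ⟨hr, by field_simp, List.prefix_of_prefix_length_le ((List.take_prefix m p).trans hpre)
    (flatten_replicate_prefix_of_le (by simp) r) ?_⟩
  simp only [List.length_flatten, List.map_replicate, List.sum_replicate, smul_eq_mul]
  exact Nat.le_mul_of_pos_right _ (List.length_pos_iff.mpr hr)

lemma drop_length_prefix (hp : IsPow r p β) : p.drop r.length <+: p :=
  List.prefix_of_prefix_length_le
    ((hp.2.2.drop r.length).trans (flatten_replicate_drop_length_prefix _ r)) hp.2.2 (by simp)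

lemma getElem_add_length (hp : IsPow r p β) {i : ℕ} (hi : i + r.length < p.length) :
    p[i + r.length] = p[i] := by
  have := hp.drop_length_prefix.getElem (i := i) (by simp; omega)
  simpa [Nat.add_comm] using this

lemma lt_of_powFree {α : ℚ} (hp : IsPow r p β) (hfree : PowFree α p) : β < α :=
  lt_of_not_ge fun hαβ => hfree r p β hαβ hp (List.infix_refl p)

end IsPow

lemma occursL_iff {g : ℕ → A} {p : List A} {i : ℕ} :
    OccursL g p i ↔ ∀ j (hj : j < p.length), p.reverse[j]'(by simpa using hj) = g (i + j) := by
  unfold OccursL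
  rw [List.ext_get_iff]
  simp

lemma appendL_append_apply_add (s : ℕ → A) (v t : List A) (n : ℕ) :
    appendL s (v ++ t) (n + t.length) = appendL s v n := by
  unfold appendL
  rw [List.reverse_append, List.getD_append_right _ _ _ _ (by simp)]
  simp only [List.length_reverse, List.length_append, Nat.add_sub_cancel]
  congr 2
  omega

lemma appendL_append_apply_mem (s : ℕ → A) (v t : List A) {j : ℕ} (hj : j < t.length) :
    appendL s (v ++ t) j ∈ t := by
  have hj' : j < t.reverse.length := by simpa using hj
  rw [appendL, List.reverse_append, List.getD_append _ _ _ _ hj', List.getD_eq_getElem _ _ hj']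
  exact List.mem_reverse.mp (List.getElem_mem hj')

lemma appendL_concat_apply_zero (s : ℕ → A) (v : List A) (a : A) :
    appendL s (v ++ [a]) 0 = a := by
  simp [appendL]

namespace SuffixL

variable {s : ℕ → A} {v p : List A}

lemma apply {g : ℕ → A} (h : SuffixL g p) {j : ℕ} (hj : j < p.length) :
    g j = p.reverse[j]'(by simpa using hj) := by
  simpa using (occursL_iff.mp h j hj).symm

lemma suffix (h : SuffixL (appendL s v) p) (hlen : p.length ≤ v.length) : p <:+ v := by
  rw [← List.reverse_prefix, List.prefix_iff_eq_take]
  refine List.ext_getElem (by simpa using hlen) fun j hj _ => ?_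
  simp only [List.length_reverse] at hj
  rw [List.getElem_take, ← h.apply hj, appendL, List.getD_eq_getElem _ _ (by simp; omega)]

lemma take_of_append {t : List A} (h : SuffixL (appendL s (v ++ t)) p) :
    SuffixL (appendL s v) (p.take (p.length - t.length)) := by
  refine occursL_iff.mpr fun j hj => ?_
  simp only [List.length_take] at hj
  rw [zero_add, ← appendL_append_apply_add s v t, h.apply (by omega)]
  simp only [List.getElem_reverse, List.getElem_take, List.length_take]
  congr 1
  omega

lemma occursL_append (h : SuffixL (appendL s v) p) (t : List A) :
    OccursL (appendL s (v ++ t)) p t.length := by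
  refine occursL_iff.mpr fun j hj => ?_
  rw [Nat.add_comm t.length, appendL_append_apply_add, h.apply hj]

lemma apply_add_length {g : ℕ → A} {r : List A} {β : ℚ} (h : SuffixL g p) (hp : IsPow r p β)
    {j : ℕ} (hj : j + r.length < p.length) : g (j + r.length) = g j := by
  rw [h.apply hj, h.apply (by omega)]
  simp only [List.getElem_reverse]
  rw [← hp.getElem_add_length (by omega)]
  congr 1
  omega

lemma lt_length_of_apply_eq {g : ℕ → A} {r : List A} {β : ℚ} {a : A} {n : ℕ} (h : SuffixL g p)
    (hp : IsPow r p β) (hn : n < p.length) (hgn : g n = a) (hne : ∀ j < n, g j ≠ a) :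
    n < r.length := by
  have hr := List.length_pos_iff.mpr hp.1
  by_contra! hrn
  have hper := h.apply_add_length hp (j := n - r.length) (by omega)
  rw [Nat.sub_add_cancel hrn, hgn] at hper
  exact hne _ (by omega) hper.symm

end SuffixL

lemma Gamma.add_one_mul_length_le {α : ℚ} {w η u : List A} (h : Gamma α w η u) (hα : 1 ≤ α)
    (hu : u.length ≤ w.length) : (α + 1) * w.length ≤ η.length :=
  calc (α + 1) * w.length
      ≤ (α + 1) * α ^ (w.length - u.length) * w.length := by
        gcongr
        exact le_mul_of_one_le_right (by linarith) (one_le_pow₀ hα)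
    _ ≤ η.length := h.2 hu

theorem statement6_general (k : ℕ) (α : ℚ) (hα : 5 ≤ α)
    (s : ℕ → Fin k) (σ w η u : List (Fin k)) (x y : Fin k)
    (r : List (Fin k)) (β : ℚ)
    (hΔ : Delta α s σ w η x u) (hyx : y ≠ x)
    (hPi : PiCond α s σ w η x u y r β)
    (hnsuf : ¬ ∃ p : List (Fin k), IsPow r p β ∧ p <:+ (η ++ [x] ++ u ++ [y])) :
    w.length < r.length := by
  obtain ⟨-, hfree, hΓ, -, -, hxu⟩ := hΔ
  obtain ⟨hr, -, -, p, hpow, hsuf⟩ := hPi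
  have hr0 : 0 < r.length := List.length_pos_iff.mpr hr
  by_contra! hrw
  have hlong : η.length + u.length + 2 < p.length := by
    by_contra! hshort
    exact hnsuf ⟨p, hpow, List.suffix_of_suffix_length_le (hsuf.suffix (by simp; omega))
      ⟨σ ++ w, by simp⟩ (by simp; omega)⟩
  rw [List.append_assoc _ u] at hsuf
  have hx := appendL_append_apply_add s (σ ++ w ++ η ++ [x]) (u ++ [y]) 0
  rw [zero_add, appendL_concat_apply_zero] at hx
  have hnx : ∀ j < (u ++ [y]).length, appendL s (σ ++ w ++ η ++ [x] ++ (u ++ [y])) j ≠ x := by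
    intro j hj hjx
    rcases List.mem_append.mp (hjx ▸ appendL_append_apply_mem s _ _ hj) with hxu' | hxy
    · exact hxu ((List.singleton_infix_iff x u).mpr hxu')
    · exact hyx (List.mem_singleton.mp hxy).symm
  have hru := hsuf.lt_length_of_apply_eq hpow (by simp; omega) hx hnx
  have hη := hΓ.add_one_mul_length_le (by linarith) (by simp at hru; omega)
  have hcut := (hpow.take (p.length - (u ++ [y]).length)).lt_of_powFree
    (hfree _ ⟨_, hsuf.take_of_append.occursL_append u⟩)
  rw [div_lt_iff₀ (by exact_mod_cast hr0)] at hcut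
  have hm : (η.length : ℚ) < (p.take (p.length - (u ++ [y]).length)).length := by
    simp only [List.length_take, List.length_append, List.length_singleton]
    norm_cast
    omega
  have hrwQ : α * r.length ≤ α * w.length := by gcongr
  linarith

/-- Lemma: if `(s,σ,w,η,x,u) ∈ Δ`, `y ≠ x`,
`(r,β) ∈ Π(s,σ,w,η,x,u,y)` and `r^β` is not a suffix of `ηxuy`, then `|r| > |w|`. -/
theorem statement6 (k : ℕ) (hk : 3 ≤ k) (α : ℚ) (hα : 5 ≤ α)
    (s : ℕ → Fin k) (σ w η u : List (Fin k)) (x y : Fin k)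
    (r : List (Fin k)) (β : ℚ)
    (hΔ : Delta α s σ w η x u) (hyx : y ≠ x)
    (hPi : PiCond α s σ w η x u y r β)
    (hnsuf : ¬ ∃ p : List (Fin k), IsPow r p β ∧ p <:+ (η ++ [x] ++ u ++ [y])) :
    w.length < r.length :=
  statement6_general k α hα s σ w η u x y r β hΔ hyx hPi hnsuf

end PowerFreeFormalization
end

section
/- Assume α ≥ 5, (s, σ, w, η, x, u) ∈ Δ, y ∈ Σ_k with y ≠ x, and Π(s, σ, w, η, x, u, y) ≠ ∅. Then there exists a prefix η̄ of η such that (s, σ, w, η̄, x, uy) ∈ Δ. -/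
namespace PowerFreeFormalization

variable {A : Type*}

/-!
A suffix `r^β` with `β > α ≥ 5` gives `t = sσwηxuy` period `|r|` on a suffix longer than
`5|r|`. This period exceeds `|uy|`: otherwise the `x` would recur inside `uy`, and the
periodic suffix is longer than `uy` because `uy` is power free. Nor does the periodic suffix
reach more than one period past the end of `w`, or `w` would occur a second time in `sσw`.
With the length bound of `Γ` this leaves `|r|` small against `|η|`. Cutting the last `|r|`
letters off `η` then shifts `t` by one period, so `sσwη̄xuy` is `sσwηxu` with its last
`|r| - 1` letters removed, hence power free, and `η̄` is still long enough for `Γ`.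
-/

section Words

variable {g g' : ℕ → A} {L a b p r v : List A} {α β : ℚ} {d m n : ℕ}

theorem appendL_of_lt (h : n < L.length) : appendL g L n = L.reverse[n]'(by simpa using h) :=
  List.getD_eq_getElem _ _ (by simpa using h)

theorem appendL_of_le (h : L.length ≤ n) : appendL g L n = g (n - L.length) :=
  List.getD_eq_default _ _ (by simpa using h)

theorem appendL_congr_of_lt (h : n < L.length) : appendL g L n = appendL g' L n := by
  rw [appendL_of_lt h, appendL_of_lt h]

theorem appendL_append (g : ℕ → A) (L₁ L₂ : List A) :
    appendL g (L₁ ++ L₂) = appendL (appendL g L₁) L₂ := by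
  funext n
  simp only [appendL, List.reverse_append, List.length_append]
  by_cases h : n < L₂.length
  · rw [List.getD_append _ _ _ _ (by simpa using h), List.getD_eq_getElem _ _ (by simpa using h),
      List.getD_eq_getElem _ _ (by simpa using h)]
  · rw [List.getD_append_right _ _ _ _ (by simpa using h), List.length_reverse,
      List.getD_eq_default L₂.reverse _ (by simpa using h), Nat.sub_sub, Nat.add_comm L₁.length]

theorem appendL_apply_add_length (g : ℕ → A) (L : List A) (n : ℕ) :
    appendL g L (n + L.length) = g n := by
  rw [appendL_of_le (Nat.le_add_left _ _), Nat.add_sub_cancel]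

theorem appendL_append_apply_add_length (g : ℕ → A) (L₁ L₂ : List A) (n : ℕ) :
    appendL g (L₁ ++ L₂) (n + L₂.length) = appendL g L₁ n := by
  rw [appendL_append, appendL_apply_add_length]

theorem occursL_iff_getElem {i : ℕ} :
    OccursL g p i ↔ ∀ j (hj : j < p.length), p.reverse[j]'(by simpa using hj) = g (i + j) := by
  refine ⟨fun h j hj => ?_, fun h => List.ext_getElem (by simp) fun j h₁ _ => ?_⟩
  · rw [List.getElem_of_eq h (by simpa using hj)]
    simp
  · simpa using h j (by simpa using h₁)

theorem suffixL_appendL (g : ℕ → A) (L : List A) : SuffixL (appendL g L) L :=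
  occursL_iff_getElem.2 fun j hj => by rw [Nat.zero_add, appendL_of_lt hj]

theorem SuffixL.apply_s9 (h : SuffixL g L) (hd : d < L.length) :
    g d = L.reverse[d]'(by simpa using hd) := by
  rw [occursL_iff_getElem.1 h d hd, Nat.zero_add]

theorem SuffixL.apply_mem (h : SuffixL g L) (hd : d < L.length) : g d ∈ L := by
  rw [h.apply_s9 hd]
  exact List.mem_reverse.1 (List.getElem_mem _)

theorem SuffixL.mono (h : SuffixL g L) (hv : v <:+ L) : SuffixL g v :=
  occursL_iff_getElem.2 fun j hj => by
    rw [(List.reverse_prefix.2 hv).getElem, Nat.zero_add, h.apply_s9 (by have := hv.length_le; omega)]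

theorem SuffixL.isSuffix_of_length_le (ha : SuffixL g a) (hb : SuffixL g b)
    (hl : a.length ≤ b.length) : a <:+ b := by
  rw [← List.reverse_prefix, ha, hb, ← Nat.min_eq_left hl, ← List.take_range, List.map_take]
  exact List.take_prefix _ _

theorem FactorL.of_apply_add (hg : ∀ n, g' n = g (n + m)) (h : FactorL g' p) : FactorL g p := by
  obtain ⟨i, hi⟩ := h
  refine ⟨i + m, occursL_iff_getElem.2 fun j hj => ?_⟩
  rw [occursL_iff_getElem.1 hi j hj, hg, Nat.add_right_comm]

theorem PowFreeL.of_apply_add (h : PowFreeL α g) (hg : ∀ n, g' n = g (n + m)) :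
    PowFreeL α g' :=
  fun p hp => h p (hp.of_apply_add hg)

/-- Offsets are counted from the right end, so this says that the suffix of length `N` of `g`
has period `m`. -/
def HasSuffixPeriod (g : ℕ → A) (N m : ℕ) : Prop :=
  ∀ d, d + m < N → g (d + m) = g d

theorem getElem_flatten_replicate_add_length {i : ℕ}
    (hi : i + r.length < (List.replicate n r).flatten.length) :
    (List.replicate n r).flatten[i + r.length] = (List.replicate n r).flatten[i]'(by omega) := by
  obtain _ | n := n
  · simp at hi
  have hsplit : (List.replicate (n + 1) r).flatten = r ++ (List.replicate n r).flatten := by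
    rw [List.replicate_succ, List.flatten_cons]
  have hpre : (List.replicate n r).flatten <+: (List.replicate (n + 1) r).flatten := by
    rw [List.replicate_succ', List.flatten_append]
    exact List.prefix_append _ _
  have hi' : i < (List.replicate n r).flatten.length := by
    rw [hsplit, List.length_append] at hi
    omega
  rw [List.getElem_of_eq hsplit, List.getElem_append_right (Nat.le_add_left _ _)]
  simp only [Nat.add_sub_cancel]
  exact hpre.getElem hi'

theorem IsPow.getElem_add_length_s9 (h : IsPow r p β) {i : ℕ} (hi : i + r.length < p.length) :
    p[i + r.length] = p[i]'(by omega) := by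
  have hp := h.2.2
  rw [hp.getElem, hp.getElem, getElem_flatten_replicate_add_length]

theorem IsPow.hasSuffixPeriod (h : IsPow r p β) (hs : SuffixL g p) :
    HasSuffixPeriod g p.length r.length := fun d hd => by
  rw [hs.apply_s9 hd, hs.apply_s9 (by omega), List.getElem_reverse, List.getElem_reverse,
    ← h.getElem_add_length_s9 (by omega)]
  congr 1
  omega

theorem IsPow.mul_length_lt (h : IsPow r p β) (hn : (n : ℚ) < β) : n * r.length < p.length := by
  have hr : (1 : ℚ) ≤ r.length := by exact_mod_cast List.length_pos_iff.2 h.1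
  have : ((n * r.length : ℕ) : ℚ) < p.length := by
    rw [h.2.1]
    push_cast
    nlinarith
  exact_mod_cast this

theorem IsPow.length_lt_of_powFree (h : IsPow r p β) (hαβ : α ≤ β) (hp : SuffixL g p)
    (hv : SuffixL g v) (hfree : PowFree α v) : v.length < p.length := by
  by_contra hle
  exact hfree r p β hαβ h (hp.isSuffix_of_length_le hv (by omega)).isInfix

end Words

section Periods

variable {g : ℕ → A} {a v w ξ L : List A} {x : A} {m N : ℕ}

theorem HasSuffixPeriod.length_lt (hper : HasSuffixPeriod g N m) (hm : 0 < m)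
    (hs : SuffixL g (x :: v)) (hx : x ∉ v) (hv : v.length < N) : v.length < m := by
  by_contra! hle
  have hxv : g v.length = x := by
    rw [hs.apply_s9 (by simp)]
    simp
  have hmem : g (v.length - m) ∈ v := (hs.mono (List.suffix_cons x v)).apply_mem (by omega)
  rw [← hper _ (by omega), Nat.sub_add_cancel hle, hxv] at hmem
  exact hx hmem

theorem HasSuffixPeriod.lt_of_existsUnique_occursL (hper : HasSuffixPeriod (appendL g L) N m)
    (hm : 0 < m) (h0 : OccursL g w 0) (huniq : ∃! i, OccursL g w i) :
    N < L.length + w.length + m := by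
  by_contra! hN
  have hwm : OccursL g w m := occursL_iff_getElem.2 fun j hj => by
    rw [occursL_iff_getElem.1 h0 j hj, ← appendL_apply_add_length g L,
      ← appendL_apply_add_length g L (m + j),
      show m + j + L.length = 0 + j + L.length + m by omega, hper _ (by omega)]
  obtain ⟨i, -, hi⟩ := huniq
  exact hm.ne' ((hi m hwm).trans (hi 0 h0).symm)

theorem HasSuffixPeriod.appendL_apply_eq
    (hper : HasSuffixPeriod (appendL g (a ++ ξ ++ v)) N ξ.length)
    (hN : v.length + ξ.length ≤ N) (n : ℕ) :
    appendL g (a ++ v) n = appendL g (a ++ ξ ++ v) (n + ξ.length) := by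
  by_cases hn : n < v.length
  · rw [hper _ (by omega), appendL_append, appendL_append _ (a ++ ξ)]
    exact appendL_congr_of_lt hn
  · obtain ⟨k, rfl⟩ := Nat.exists_eq_add_of_le (not_lt.1 hn)
    rw [Nat.add_comm v.length, appendL_append_apply_add_length, Nat.add_right_comm,
      appendL_append_apply_add_length, appendL_append_apply_add_length]

end Periods

theorem Gamma.mul_length_le {w η u : List A} {α : ℚ} (hΓ : Gamma α w η u) (hα : 5 ≤ α)
    (hu : u.length < w.length) : 30 * w.length ≤ η.length := by
  have hpow : α ≤ α ^ (w.length - u.length) := le_self_pow₀ (by linarith) (by omega)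
  have h30 : (30 : ℚ) ≤ (α + 1) * α ^ (w.length - u.length) := by nlinarith
  have : ((30 * w.length : ℕ) : ℚ) ≤ η.length := by
    push_cast
    nlinarith [hΓ.2 hu.le, (Nat.cast_nonneg w.length : (0 : ℚ) ≤ w.length)]
  exact_mod_cast this

theorem Gamma.exists_eq_append {w η u : List A} {α : ℚ} (hΓ : Gamma α w η u) (hα : 5 ≤ α)
    {m : ℕ} (hm : u.length + 2 ≤ m) (h3 : 3 * m < η.length + w.length) (y : A) :
    ∃ η' ξ, η = η' ++ ξ ∧ ξ.length = m ∧ Gamma α w η' (u ++ [y]) := by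
  have hmη : m ≤ η.length := by
    rcases Nat.lt_or_ge u.length w.length with hu | hu
    · have := hΓ.mul_length_le hα hu
      omega
    · omega
  refine ⟨η.take (η.length - m), η.drop (η.length - m), (List.take_append_drop _ _).symm,
    by simp; omega, hΓ.1, fun hle => ?_⟩
  simp only [List.length_append, List.length_singleton] at hle
  have hu : u.length < w.length := by omega
  have h90 : 90 * m < 31 * η.length := by have := hΓ.mul_length_le hα hu; omega
  have hexp : w.length - u.length = w.length - (u.length + 1) + 1 := by omega
  have hγ := hΓ.2 hu.le
  rw [hexp, pow_succ] at hγ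
  have hmq : (90 : ℚ) * m < 31 * η.length := by exact_mod_cast h90
  have hX : (0 : ℚ) ≤ (α + 1) * α ^ (w.length - (u.length + 1)) * w.length := by positivity
  simp only [List.length_append, List.length_singleton, List.length_take]
  rw [Nat.min_eq_left (Nat.sub_le _ _), Nat.cast_sub hmη]
  nlinarith

theorem statement9_general (k : ℕ) (α : ℚ) (hα : 5 ≤ α)
    (s : ℕ → Fin k) (σ w η u : List (Fin k)) (x y : Fin k)
    (hΔ : Delta α s σ w η x u) (hyx : y ≠ x)
    (hPi : ∃ (r : List (Fin k)) (β : ℚ), PiCond α s σ w η x u y r β) :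
    ∃ η' : List (Fin k), η' <+: η ∧ Delta α s σ w η' x (u ++ [y]) := by
  obtain ⟨hwne, hPF, hΓ, huniq, hxs, hxu⟩ := hΔ
  obtain ⟨r, β, hr, hαβ, hfree, p, hpow, hsuf⟩ := hPi
  have hm : 0 < r.length := List.length_pos_iff.2 hr
  have hxuy : x ∉ u ++ [y] := by
    simpa [List.singleton_infix_iff, hyx.symm] using hxu
  set t := appendL s (σ ++ w ++ η ++ [x] ++ u ++ [y])
  have hper := hpow.hasSuffixPeriod hsuf
  have hsuf' : SuffixL t (x :: (u ++ [y])) :=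
    (suffixL_appendL s _).mono ⟨σ ++ w ++ η, by simp⟩
  have hpu := hpow.length_lt_of_powFree hαβ.le hsuf (hsuf'.mono (List.suffix_cons _ _)) hfree
  have hru := hper.length_lt hm hsuf' hxuy hpu
  have hp5 := hpow.mul_length_lt (n := 5) (by push_cast; linarith)
  have hpw : p.length < (η ++ x :: (u ++ [y])).length + w.length + r.length := by
    refine HasSuffixPeriod.lt_of_existsUnique_occursL ?_ hm
      ((suffixL_appendL s _).mono ⟨σ, rfl⟩) huniq
    simpa [t, ← appendL_append] using hper
  simp only [List.length_append, List.length_cons, List.length_nil] at hru hpw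
  obtain ⟨η', ξ, rfl, hξ, hΓ'⟩ :=
    hΓ.exists_eq_append hα (m := r.length) (by omega) (by omega) y
  refine ⟨η', List.prefix_append _ _, hwne, ?_, hΓ', huniq, hxs,
    (List.singleton_infix_iff _ _).not.2 hxuy⟩
  have ht : t = appendL s (σ ++ w ++ η' ++ ξ ++ x :: (u ++ [y])) := by simp [t]
  have ht₀ : ∀ n, t (n + 1) = appendL s (σ ++ w ++ (η' ++ ξ) ++ [x] ++ u) n :=
    appendL_append_apply_add_length _ _ [y]
  rw [ht, ← hξ] at hper
  have hshift := hper.appendL_apply_eq (by simp; omega)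
  refine hPF.of_apply_add (m := r.length - 1) fun n => ?_
  rw [show σ ++ w ++ η' ++ [x] ++ (u ++ [y]) = σ ++ w ++ η' ++ x :: (u ++ [y]) by simp, hshift,
    ← ht, hξ, ← ht₀]
  congr 1
  omega

/-- Lemma: if `(s,σ,w,η,x,u) ∈ Δ`, `y ≠ x` and
`Π(s,σ,w,η,x,u,y) ≠ ∅`, then there is a prefix `η̄` of `η` with
`(s,σ,w,η̄,x,uy) ∈ Δ`. -/
theorem statement9 (k : ℕ) (hk : 3 ≤ k) (α : ℚ) (hα : 5 ≤ α)
    (s : ℕ → Fin k) (σ w η u : List (Fin k)) (x y : Fin k)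
    (hΔ : Delta α s σ w η x u) (hyx : y ≠ x)
    (hPi : ∃ (r : List (Fin k)) (β : ℚ), PiCond α s σ w η x u y r β) :
    ∃ η' : List (Fin k), η' <+: η ∧ Delta α s σ w η' x (u ++ [y]) :=
  statement9_general k α hα s σ w η u x y hΔ hyx hPi

end PowerFreeFormalization
end

section
/- Assume k ≥ 3 and α ≥ 5. If v is a bi-infinite α-power-free word over Σ_k and w is a nonempty finite factor of v, then there exist a bi-infinite α-power-free word v̄ over Σ_k and a letter x ∈ Σ_k such that w is a factor of v̄ and x is not a recurrent factor of v̄ (i.e. x has only finitely many occurrences in v̄). -/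
/-!
Cut `v` at `c₁ ≤ i` and `c₂ ≥ i + |w|` around an occurrence of `w`, surround `v[c₁, c₂]` by a
letter `x ∉ {v (c₁ - 1), v (c₂ + 1)}`, and continue on both sides with Thue–Morse words over two
letters other than `x`. Then `x` is not recurrent, and since the Thue–Morse word has no fourth
powers, an `α`-power (`α ≥ 5`) of period `ρ` must meet one of the two barriers `x`; it cannot
reach a copy of that `x` inside a tail.

The cut positions are chosen good: every `ρ`-periodic factor of `v` of length `⌈αρ⌉ - ρ` ending
at `c₂` is continued periodically by `v (c₂ + 1) ≠ x` (symmetrically at `c₁`). Hence the power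
cannot stop at a barrier after a long stretch of `v`; it must cover `v[c₁, c₂]` with a period
`ρ ≤ |v[c₁, c₂]| / 3`, and the first letters of the tails are chosen to break all such periods.
Good cuts exist in every interval of length `m ≳ 720 log B`: by Fine and Wilf, positions where a
window with period in `[2^j, 2^(j+1))` fails to continue are more than `2^j + 1` apart, and
`∑ 1 / (2^j + 2) < 1`.
-/
namespace PowerFreeFormalization

variable {A : Type*}

section Periodicity

def PerOn (f : ℤ → A) (a b : ℤ) (p : ℕ) : Prop :=
  ∀ q, a ≤ q → q + p ≤ b → f q = f (q + p)

variable {f : ℤ → A} {a b : ℤ} {p : ℕ}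

theorem PerOn.mono {a' b' : ℤ} (h : PerOn f a b p) (ha : a ≤ a') (hb : b' ≤ b) :
    PerOn f a' b' p :=
  fun q hq hqb => h q (ha.trans hq) (hqb.trans hb)

theorem PerOn.comp_neg (h : PerOn f a b p) : PerOn (fun q => f (-q)) (-b) (-a) p := by
  intro q hq hqb
  have := h (-(q + p)) (by omega) (by omega)
  rw [show -(q + p) + p = -q by ring] at this
  exact this.symm

def window (f : ℤ → A) (a : ℤ) (n : ℕ) : List A :=
  (List.range n).map fun j : ℕ => f (a + j)

@[simp] theorem length_window (n : ℕ) : (window f a n).length = n := by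
  simp [window]

theorem getElem?_window (n j : ℕ) :
    (window f a n)[j]? = if j < n then some (f (a + j)) else none := by
  split_ifs with hj
  · simp [window, List.getElem?_range hj]
  · simp [window, hj]

theorem perOn_iff_hasPeriod (n : ℕ) : PerOn f a (a + n - 1) p ↔ (window f a n).HasPeriod p := by
  rw [List.hasPeriod_iff_getElem?]
  simp only [length_window, getElem?_window]
  constructor
  · intro h j hj
    rw [if_pos (by omega), if_pos (by omega), h (a + j) (by omega) (by omega)]
    push_cast; ring_nf
  · intro h q hq hqb
    obtain ⟨j, rfl⟩ : ∃ j : ℕ, q = a + j := ⟨(q - a).toNat, by omega⟩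
    have := h j (by omega)
    rw [if_pos (by omega), if_pos (by omega)] at this
    simpa [add_assoc] using this

theorem exists_eq_add_sub_one (hab : a ≤ b + 1) : ∃ n : ℕ, b = a + n - 1 :=
  ⟨(b - a + 1).toNat, by omega⟩

theorem PerOn.gcd {q : ℕ} (hp : PerOn f a b p) (hq : PerOn f a b q)
    (hlen : ((p + q - p.gcd q : ℕ) : ℤ) ≤ b - a + 1) : PerOn f a b (p.gcd q) := by
  obtain ⟨n, rfl⟩ := exists_eq_add_sub_one (a := a) (b := b) (by omega)
  rw [perOn_iff_hasPeriod] at hp hq ⊢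
  exact hp.gcd hq (by simp; omega)

theorem PerOn.apply_eq_of_dvd {q q' : ℤ} (h : PerOn f a b p) (hq : a ≤ q) (hqb : q ≤ b)
    (hq' : a ≤ q') (hq'b : q' ≤ b) (hd : (p : ℤ) ∣ q' - q) : f q = f q' := by
  obtain ⟨n, rfl⟩ := exists_eq_add_sub_one (a := a) (b := b) (by omega)
  obtain ⟨i, rfl⟩ : ∃ i : ℕ, q = a + i := ⟨(q - a).toNat, by omega⟩
  obtain ⟨i', rfl⟩ : ∃ i : ℕ, q' = a + i := ⟨(q' - a).toNat, by omega⟩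
  have hw := (perOn_iff_hasPeriod n).1 h
  have hmod : i % p = i' % p :=
    Nat.modEq_iff_dvd.2 (by rwa [show a + (i' : ℤ) - (a + i) = i' - i by ring] at hd)
  have e := hw.getElem?_mod p i _ (by simp; omega)
  have e' := hw.getElem?_mod p i' _ (by simp; omega)
  rw [hmod, e'] at e
  rw [getElem?_window, getElem?_window, if_pos (by omega), if_pos (by omega)] at e
  exact (Option.some_injective _ e).symm

theorem PerOn.of_dvd {P : ℕ} {u v : ℤ} (hP : PerOn f a b P) (hg : PerOn f u v p)
    (hau : a ≤ u) (hvb : v ≤ b) (hdvd : p ∣ P) (hlen : (P : ℤ) + p ≤ v - u + 1) (hP0 : 0 < P) :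
    PerOn f a b p := by
  intro x hx hxb
  have hPz : (0 : ℤ) < P := by exact_mod_cast hP0
  set y := u + (x - u) % P
  have hy := Int.emod_nonneg (x - u) hPz.ne'
  have hy' := Int.emod_lt_of_pos (x - u) hPz
  have hxy : (P : ℤ) ∣ y - x := by
    rw [show y - x = -((x - u) - (x - u) % P) by ring]
    exact Int.dvd_self_sub_emod.neg_right
  have hdvd' : (p : ℤ) ∣ (P : ℤ) := by exact_mod_cast hdvd
  calc f x = f y := hP.apply_eq_of_dvd hx (by omega) (by omega) (by omega) hxy
    _ = f (y + p) := hg y (by omega) (by omega)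
    _ = f (x + p) := hP.apply_eq_of_dvd (by omega) (by omega) (by omega) hxb
        (by rw [show x + p - (y + p) = -(y - x) by ring]; exact hxy.neg_right)

end Periodicity

section Powers

variable {f : ℤ → A} {i : ℤ}

theorem occursZ_iff_eq_window {p : List A} : OccursZ f p i ↔ p = window f i p.length := by
  rw [OccursZ, window, bind_pure_comp]
  simp only [List.map_eq_map, List.map_map, Function.comp_def]

theorem OccursZ.getElem {p : List A} (h : OccursZ f p i) (j : ℕ) (hj : j < p.length) :
    p[j] = f (i + j) := by
  rw [occursZ_iff_eq_window] at h
  rw [List.getElem_of_eq h]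
  simp [window]

theorem OccursZ.congr {g : ℤ → A} {p : List A} (h : OccursZ f p i)
    (hfg : ∀ j : ℕ, j < p.length → f (i + j) = g (i + j)) : OccursZ g p i :=
  occursZ_iff_eq_window.2 <| List.ext_getElem (by simp) fun j hj _ => by
    rw [h.getElem j hj, hfg j hj]
    simp [window]

theorem FactorZ.of_infix {p q : List A} (h : FactorZ f q) (hpq : p <:+: q) : FactorZ f p := by
  obtain ⟨i, hi⟩ := h
  obtain ⟨s, t, rfl⟩ := hpq
  refine ⟨i + s.length, occursZ_iff_eq_window.2 (List.ext_getElem (by simp) fun j hj _ => ?_)⟩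
  have := hi.getElem (s.length + j) (by simp; omega)
  rw [List.getElem_append_left (by simp; omega), List.getElem_append_right (by omega)] at this
  simp only [add_tsub_cancel_left] at this
  simp [window, this, add_assoc]

theorem getElem?_flatten_replicate (r : List A) {n j : ℕ} (hj : j < n * r.length) :
    (List.replicate n r).flatten[j]? = r[j % r.length]? := by
  induction n generalizing j with
  | zero => simp at hj
  | succ n ih =>
    rw [List.replicate_succ, List.flatten_cons]
    by_cases h : j < r.length
    · rw [List.getElem?_append_left h, Nat.mod_eq_of_lt h]
    · rw [Nat.succ_mul] at hj
      rw [List.getElem?_append_right (by omega), ih (by omega),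
        ← Nat.mod_eq_sub_mod (by omega)]

theorem prefix_flatten_replicate_iff {r q : List A} (hr : 0 < r.length) :
    q <+: (List.replicate q.length r).flatten ↔
      ∀ j (hj : j < q.length), q[j] = r[j % r.length]'(Nat.mod_lt _ hr) := by
  rw [List.prefix_iff_getElem?]
  refine forall₂_congr fun j hj => ?_
  rw [getElem?_flatten_replicate r (by nlinarith), List.getElem?_eq_getElem (Nat.mod_lt _ hr),
    Option.some_inj, eq_comm]

theorem isPow_window {ρ n : ℕ} (hρ : 0 < ρ) (h : PerOn f i (i + n - 1) ρ) :
    IsPow (window f i ρ) (window f i n) (n / ρ) := by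
  refine ⟨by simpa [← List.length_pos_iff] using hρ, by simp; field_simp, ?_⟩
  rw [prefix_flatten_replicate_iff (by simpa using hρ)]
  intro j hj
  replace hj : j < n := by simpa using hj
  simp only [window, List.getElem_map, List.getElem_range, List.length_map, List.length_range]
  have := Nat.mod_le j ρ
  refine (h.apply_eq_of_dvd (by omega) (by omega) (by omega) (by omega) ?_).symm
  rw [show i + (j : ℤ) - (i + (j % ρ : ℕ)) = ((j - j % ρ : ℕ) : ℤ) by omega]
  exact Int.natCast_dvd_natCast.2 (Nat.dvd_sub_mod j)

theorem OccursZ.perOn_of_isPow {q r : List A} {β : ℚ} (h : OccursZ f q i) (hq : IsPow r q β) :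
    PerOn f i (i + q.length - 1) r.length := by
  obtain ⟨hr, -, hpre⟩ := hq
  have hr' := List.length_pos_iff.2 hr
  rw [prefix_flatten_replicate_iff hr'] at hpre
  intro x hx hxb
  obtain ⟨j, rfl⟩ : ∃ j : ℕ, x = i + j := ⟨(x - i).toNat, by omega⟩
  have e := hpre (j + r.length) (by omega)
  simp only [Nat.add_mod_right] at e
  rw [← hpre j (by omega), h.getElem, h.getElem] at e
  simpa [add_assoc] using e.symm

def powLen (α : ℚ) (ρ : ℕ) : ℕ := ⌈α * ρ⌉₊

def NoPowWindow (α : ℚ) (f : ℤ → A) : Prop :=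
  ∀ i ρ, 0 < ρ → ¬ PerOn f i (i + powLen α ρ - 1) ρ

theorem powFreeZ_iff_noPowWindow {α : ℚ} : PowFreeZ α f ↔ NoPowWindow α f := by
  constructor
  · intro hf i ρ hρ hper
    have hα : α ≤ (powLen α ρ : ℚ) / ρ := by
      rw [le_div_iff₀ (by exact_mod_cast hρ)]
      exact Nat.le_ceil _
    refine hf _ ⟨i, occursZ_iff_eq_window.2 (by simp)⟩ _ _ _ hα (isPow_window hρ hper)
      (List.infix_refl _)
  · rintro hf p hp r q β hβ hq hqp
    obtain ⟨i, hi⟩ := hp.of_infix hqp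
    have hlen : powLen α r.length ≤ q.length := by
      rw [powLen, Nat.ceil_le, hq.2.1]
      exact mul_le_mul_of_nonneg_right hβ (Nat.cast_nonneg _)
    exact hf i r.length (List.length_pos_iff.2 hq.1) ((hi.perOn_of_isPow hq).mono le_rfl
      (by omega))

theorem NoPowWindow.comp_neg {α : ℚ} (hf : NoPowWindow α f) :
    NoPowWindow α (fun q => f (-q)) := by
  intro i ρ hρ h
  have := h.comp_neg
  simp only [neg_neg] at this
  exact hf _ ρ hρ (by rwa [show -(i + powLen α ρ - 1) + powLen α ρ - 1 = -i by ring])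

end Powers

section ThueMorse

def thueMorse : ℕ → Bool :=
  Nat.binaryRec false fun b _ t => xor b t

theorem thueMorse_bit (b : Bool) (n : ℕ) : thueMorse (Nat.bit b n) = xor b (thueMorse n) :=
  Nat.binaryRec_eq b n (Or.inl rfl)

theorem thueMorse_two_mul (n : ℕ) : thueMorse (2 * n) = thueMorse n := by
  simpa using thueMorse_bit false n

theorem thueMorse_two_mul_add_one (n : ℕ) : thueMorse (2 * n + 1) = !thueMorse n := by
  simpa using thueMorse_bit true n

theorem not_thueMorse_eq_eq (n : ℕ) :
    ¬ (thueMorse n = thueMorse (n + 1) ∧ thueMorse (n + 1) = thueMorse (n + 2)) := by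
  rintro ⟨h₁, h₂⟩
  obtain ⟨m, rfl | rfl⟩ := Nat.even_or_odd' n
  · rw [thueMorse_two_mul, thueMorse_two_mul_add_one] at h₁
    cases thueMorse m <;> simp at h₁
  · rw [show 2 * m + 1 + 1 = 2 * (m + 1) by ring, show 2 * m + 1 + 2 = 2 * (m + 1) + 1 by ring,
      thueMorse_two_mul, thueMorse_two_mul_add_one] at h₂
    cases thueMorse (m + 1) <;> simp at h₂

def HasNoFourthPowers (t : ℕ → A) : Prop :=
  ∀ ρ i, 0 < ρ → ¬ ∀ s < 3 * ρ, t (i + s) = t (i + s + ρ)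

theorem HasNoFourthPowers.comp {B : Type*} {t : ℕ → A} (ht : HasNoFourthPowers t) {g : A → B}
    (hg : Function.Injective g) : HasNoFourthPowers (g ∘ t) :=
  fun ρ i hρ h => ht ρ i hρ fun s hs => hg (h s hs)

/-- A `ρ`-periodic factor of length `4ρ` is halved to a `ρ / 2`-periodic one when `ρ` is even,
and forces three equal consecutive letters when `ρ` is odd. -/
theorem hasNoFourthPowers_thueMorse : HasNoFourthPowers thueMorse := by
  intro ρ
  induction ρ using Nat.strong_induction_on with
  | _ ρ ih =>
  intro a hρ H
  obtain ⟨ρ', rfl | rfl⟩ := Nat.even_or_odd' ρ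
  · refine ih ρ' (by omega) ((a + 1) / 2) (by omega) fun s hs => ?_
    have := H (2 * ((a + 1) / 2 + s) - a) (by omega)
    rwa [show a + (2 * ((a + 1) / 2 + s) - a) = 2 * ((a + 1) / 2 + s) by omega,
      show 2 * ((a + 1) / 2 + s) + 2 * ρ' = 2 * ((a + 1) / 2 + s + ρ') by ring,
      thueMorse_two_mul, thueMorse_two_mul] at this
  · have key : ∀ u, a ≤ 2 * u → 2 * u + 1 < a + 3 * (2 * ρ' + 1) →
        thueMorse (u + ρ') = !thueMorse u ∧ thueMorse (u + ρ' + 1) = !thueMorse u := by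
      intro u h₁ h₂
      have e₁ := H (2 * u - a) (by omega)
      have e₂ := H (2 * u + 1 - a) (by omega)
      rw [show a + (2 * u - a) = 2 * u by omega,
        show 2 * u + (2 * ρ' + 1) = 2 * (u + ρ') + 1 by ring,
        thueMorse_two_mul, thueMorse_two_mul_add_one] at e₁
      rw [show a + (2 * u + 1 - a) = 2 * u + 1 by omega,
        show 2 * u + 1 + (2 * ρ' + 1) = 2 * (u + ρ' + 1) by ring,
        thueMorse_two_mul, thueMorse_two_mul_add_one] at e₂
      constructor
      · rw [e₁, Bool.not_not]
      · exact e₂.symm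
    set u := (a + 1) / 2
    rcases Nat.eq_zero_or_pos ρ' with rfl | hρ'
    · have := (key u (by omega) (by omega)).1
      cases h : thueMorse u <;> simp_all
    · obtain ⟨h₁, h₂⟩ := key u (by omega) (by omega)
      obtain ⟨h₃, h₄⟩ := key (u + 1) (by omega) (by omega)
      rw [show u + 1 + ρ' = u + ρ' + 1 by ring] at h₃
      rw [show u + 1 + ρ' + 1 = u + ρ' + 2 by ring] at h₄
      exact not_thueMorse_eq_eq (u + ρ') ⟨h₁.trans h₂.symm, h₃.trans h₄.symm⟩

theorem exists_hasNoFourthPowers (hA : 3 ≤ ENat.card A) (x γ : A) :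
    ∃ t : ℕ → A, HasNoFourthPowers t ∧ (∀ n, t n ≠ x) ∧ t 0 ≠ γ := by
  obtain ⟨a, hax, haγ⟩ := ENat.exists_ne_ne_of_three_le hA x γ
  obtain ⟨b, hbx, hba⟩ := ENat.exists_ne_ne_of_three_le hA x a
  refine ⟨fun n => bif thueMorse n then b else a, ?_, fun n => ?_, ?_⟩
  · refine hasNoFourthPowers_thueMorse.comp (g := fun β => bif β then b else a) ?_
    intro β β' h
    cases β <;> cases β' <;> simp_all [eq_comm]
  · cases h : thueMorse n <;> simp [h, hax, hbx]
  · simpa [thueMorse] using haγ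

end ThueMorse

section Counting

theorem card_le_of_le_abs_sub {T : Finset ℤ} {N : ℤ} {m D : ℕ} (hD : 0 < D)
    (hT : ∀ c ∈ T, N ≤ c ∧ c < N + m) (hs : ∀ c ∈ T, ∀ c' ∈ T, c ≠ c' → (D : ℤ) ≤ |c - c'|) :
    T.card ≤ m / D + 1 := by
  calc T.card ≤ (Finset.range (m / D + 1)).card := by
        refine Finset.card_le_card_of_injOn (fun c => (c - N).toNat / D) (fun c hc => ?_)
          (fun c hc c' hc' h => ?_)
        · have := hT c hc
          simpa [Nat.lt_succ_iff] using Nat.div_le_div_right (c := D) (by omega)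
        · by_contra hne
          have := hT c hc
          have := hT c' hc'
          have hcc' := le_abs.1 (hs c hc c' hc' hne)
          have e := Nat.div_add_mod (c - N).toNat D
          have e' := Nat.div_add_mod (c' - N).toNat D
          have := Nat.mod_lt (c - N).toNat hD
          have := Nat.mod_lt (c' - N).toNat hD
          simp only at h
          rw [h] at e
          omega
    _ = m / D + 1 := Finset.card_range _

theorem sum_range_one_div_two_pow_add_two_le (n : ℕ) :
    ∑ j ∈ Finset.range n, (1 : ℚ) / (2 ^ j + 2) ≤ 697 / 720 := by
  -- `697 / 720 = ∑ j < 5, 1 / (2 ^ j + 2) + 2 / 2 ^ 5`, and `2 / 2 ^ n` bounds the tail from `n`.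
  have key : ∀ n, ∑ j ∈ Finset.range (n + 5), (1 : ℚ) / (2 ^ j + 2) + 2 / 2 ^ (n + 5) ≤
      697 / 720 := by
    intro n
    induction n with
    | zero => norm_num [Finset.sum_range_succ]
    | succ n ih =>
      rw [show n + 1 + 5 = n + 5 + 1 by ring, Finset.sum_range_succ]
      have h₁ : (1 : ℚ) / (2 ^ (n + 5) + 2) ≤ 1 / 2 ^ (n + 5) :=
        one_div_le_one_div_of_le (by positivity) (by linarith)
      have h₂ : (2 : ℚ) / 2 ^ (n + 5 + 1) = 1 / 2 ^ (n + 5) := by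
        rw [pow_succ]
        field_simp
      have h₃ : (2 : ℚ) / 2 ^ (n + 5) = 2 * (1 / 2 ^ (n + 5)) := by ring
      linarith
  calc ∑ j ∈ Finset.range n, (1 : ℚ) / (2 ^ j + 2)
      ≤ ∑ j ∈ Finset.range (n + 5), (1 : ℚ) / (2 ^ j + 2) :=
        Finset.sum_le_sum_of_subset_of_nonneg (Finset.range_mono (by omega))
          fun _ _ _ => by positivity
    _ ≤ 697 / 720 := by linarith [key n, (by positivity : (0 : ℚ) ≤ 2 / 2 ^ (n + 5))]

theorem sum_range_div_two_pow_add_two_add_lt {m J : ℕ} (hm : 720 * (J + 2) ≤ m) :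
    ∑ j ∈ Finset.range (J + 1), m / (2 ^ j + 2) + (J + 1) < m := by
  have hsum : ((∑ j ∈ Finset.range (J + 1), m / (2 ^ j + 2) : ℕ) : ℚ) ≤ m * (697 / 720) := by
    push_cast
    calc ∑ j ∈ Finset.range (J + 1), ((m / (2 ^ j + 2) : ℕ) : ℚ)
        ≤ ∑ j ∈ Finset.range (J + 1), (m : ℚ) * (1 / (2 ^ j + 2)) :=
          Finset.sum_le_sum fun j _ => Nat.cast_div_le.trans (by push_cast; rw [mul_one_div])
      _ = m * ∑ j ∈ Finset.range (J + 1), (1 : ℚ) / (2 ^ j + 2) := (Finset.mul_sum ..).symm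
      _ ≤ m * (697 / 720) := mul_le_mul_of_nonneg_left
          (sum_range_one_div_two_pow_add_two_le _) (by positivity)
  have hm' : (720 * (J + 2) : ℚ) ≤ m := by exact_mod_cast hm
  have : ((∑ j ∈ Finset.range (J + 1), m / (2 ^ j + 2) + (J + 1) : ℕ) : ℚ) < m := by
    push_cast at hsum ⊢
    linarith
  exact_mod_cast this

end Counting

section GoodCut

variable {α : ℚ} {f : ℤ → A}

def prePowLen (α : ℚ) (ρ : ℕ) : ℕ := powLen α ρ - ρ

theorem five_mul_le_powLen (hα : 5 ≤ α) (ρ : ℕ) : 5 * ρ ≤ powLen α ρ := by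
  have : ((5 * ρ : ℕ) : ℚ) ≤ α * ρ := by push_cast; nlinarith [(Nat.cast_nonneg ρ : (0 : ℚ) ≤ ρ)]
  exact_mod_cast this.trans (Nat.le_ceil _)

theorem four_mul_le_prePowLen (hα : 5 ≤ α) (ρ : ℕ) : 4 * ρ ≤ prePowLen α ρ := by
  have := five_mul_le_powLen hα ρ
  unfold prePowLen
  omega

theorem prePowLen_add (hα : 5 ≤ α) (ρ : ℕ) : prePowLen α ρ + ρ = powLen α ρ := by
  have := five_mul_le_powLen hα ρ
  unfold prePowLen
  omega

theorem powLen_add_le (hα : 2 ≤ α) {g ρ : ℕ} (h : 2 * g ≤ ρ) : powLen α g + ρ ≤ powLen α ρ := by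
  rw [powLen, powLen, ← Nat.ceil_add_natCast (by positivity)]
  apply Nat.ceil_mono
  have h' : (2 * g : ℚ) ≤ ρ := by exact_mod_cast h
  nlinarith [mul_le_mul_of_nonneg_right hα (by linarith : (0 : ℚ) ≤ ρ - g)]

/-- Otherwise `g ≤ ρ / 2` would propagate to all of `[a, b]`, which is long enough to contain an
`α`-power of period `g`. -/
theorem NoPowWindow.eq_of_perOn_of_dvd (hf : NoPowWindow α f) (hα : 2 ≤ α) {ρ g : ℕ}
    {a b u v : ℤ} (hρ : PerOn f a b ρ) (hab : (prePowLen α ρ : ℤ) ≤ b - a + 1)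
    (hg : PerOn f u v g) (hau : a ≤ u) (hvb : v ≤ b) (hlen : (ρ : ℤ) + g ≤ v - u + 1)
    (hgρ : g ∣ ρ) (hg0 : 0 < g) (hρ0 : 0 < ρ) : g = ρ := by
  by_contra hne
  obtain ⟨k, rfl⟩ := hgρ
  have hk : 2 ≤ k := by
    rcases k with _ | _ | k
    · simp at hρ0
    · simp at hne
    · omega
  have := powLen_add_le hα (show 2 * g ≤ g * k by nlinarith)
  refine hf a g hg0 ((hρ.of_dvd hg hau hvb (dvd_mul_right _ _) hlen hρ0).mono le_rfl ?_)
  unfold prePowLen at hab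
  omega

/-- The two windows share at least `ρ + ρ'` letters, so Fine and Wilf and
`eq_of_perOn_of_dvd` give `ρ = ρ'`. -/
theorem NoPowWindow.apply_eq_of_perOn (hf : NoPowWindow α f) (hα : 5 ≤ α) {ρ ρ' : ℕ} {c c' : ℤ}
    (hρ : 0 < ρ) (hρ' : 0 < ρ') (hw : PerOn f (c + 1 - prePowLen α ρ) c ρ)
    (hw' : PerOn f (c' + 1 - prePowLen α ρ') c' ρ') (hcc' : c < c') (h₁ : ρ' ≤ 3 * ρ)
    (h₂ : ρ + (c' - c) ≤ 3 * ρ') : f (c + 1 - ρ) = f (c + 1) := by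
  have := four_mul_le_prePowLen hα ρ
  have := four_mul_le_prePowLen hα ρ'
  set a := max (c + 1 - (prePowLen α ρ : ℤ)) (c' + 1 - prePowLen α ρ')
  have ha₁ : c + 1 - (prePowLen α ρ : ℤ) ≤ a := le_max_left _ _
  have ha₂ : c' + 1 - (prePowLen α ρ' : ℤ) ≤ a := le_max_right _ _
  have ha : a = c + 1 - prePowLen α ρ ∨ a = c' + 1 - prePowLen α ρ' := max_choice _ _
  have hg := (hw.mono ha₁ le_rfl).gcd (hw'.mono ha₂ hcc'.le) (by omega)
  have hg0 := Nat.gcd_pos_of_pos_left ρ' hρ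
  have := Nat.gcd_le_left ρ' hρ
  have := Nat.le_of_dvd hρ' (Nat.gcd_dvd_right ρ ρ')
  have e₁ := hf.eq_of_perOn_of_dvd (by linarith) hw (by omega) hg ha₁ le_rfl (by omega)
    (Nat.gcd_dvd_left _ _) hg0 hρ
  have e₂ := hf.eq_of_perOn_of_dvd (by linarith) hw' (by omega) hg ha₂ hcc'.le (by omega)
    (Nat.gcd_dvd_right _ _) hg0 hρ'
  rw [e₁] at e₂
  subst e₂
  simpa using hw' (c + 1 - ρ) (by omega) (by omega)

def GoodCut (α : ℚ) (B : ℕ) (f : ℤ → A) (c : ℤ) : Prop :=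
  ∀ ρ, 0 < ρ → ρ ≤ B → PerOn f (c + 1 - prePowLen α ρ) c ρ → f (c + 1 - ρ) = f (c + 1)

theorem NoPowWindow.le_abs_sub (hf : NoPowWindow α f) (hα : 5 ≤ α) {ρ ρ' : ℕ} {c c' : ℤ}
    (hρ : 0 < ρ) (hρ' : 0 < ρ') (hlog : Nat.log 2 ρ = Nat.log 2 ρ')
    (hw : PerOn f (c + 1 - prePowLen α ρ) c ρ) (he : f (c + 1 - ρ) ≠ f (c + 1))
    (hw' : PerOn f (c' + 1 - prePowLen α ρ') c' ρ') (he' : f (c' + 1 - ρ') ≠ f (c' + 1))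
    (hcc' : c ≠ c') : ((2 ^ Nat.log 2 ρ + 2 : ℕ) : ℤ) ≤ |c - c'| := by
  wlog hlt : c < c' generalizing ρ ρ' c c'
  · rw [abs_sub_comm, hlog]
    exact this hρ' hρ hlog.symm hw' he' hw he hcc'.symm (by omega)
  have h₁ := Nat.pow_log_le_self 2 hρ.ne'
  have h₂ := Nat.lt_pow_succ_log_self (by norm_num : 1 < 2) ρ
  have h₁' := Nat.pow_log_le_self 2 hρ'.ne'
  have h₂' := Nat.lt_pow_succ_log_self (by norm_num : 1 < 2) ρ'
  rw [← hlog] at h₁' h₂'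
  rw [Nat.pow_succ] at h₂ h₂'
  by_contra hclose
  rw [abs_sub_comm, abs_of_pos (by omega)] at hclose
  exact he (hf.apply_eq_of_perOn hα hρ hρ' hw hw' hlt (by omega) (by omega))

/-- Bad positions whose periods lie in the same dyadic band `[2^j, 2^(j+1))` are more than
`2^j + 1` apart, and `∑ 1 / (2^j + 2) < 1`. -/
theorem NoPowWindow.exists_goodCut (hf : NoPowWindow α f) (hα : 5 ≤ α)
    (N : ℤ) {B m : ℕ} (hm : 720 * (Nat.log 2 B + 2) ≤ m) :
    ∃ c, N ≤ c ∧ c < N + m ∧ GoodCut α B f c := by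
  classical
  by_contra! hcon
  set I := Finset.Ico N (N + m)
  have hbad : ∀ c ∈ I, ∃ ρ, (0 < ρ ∧ ρ ≤ B) ∧ PerOn f (c + 1 - prePowLen α ρ) c ρ ∧
      f (c + 1 - ρ) ≠ f (c + 1) := by
    intro c hc
    rw [Finset.mem_Ico] at hc
    have := hcon c hc.1 hc.2
    simp only [GoodCut, not_forall] at this
    obtain ⟨ρ, hρ, hρB, hw, he⟩ := this
    exact ⟨ρ, ⟨hρ, hρB⟩, hw, he⟩
  choose! ρ hρ hw he using hbad
  have hband : ∀ c ∈ I, Nat.log 2 (ρ c) ∈ Finset.range (Nat.log 2 B + 1) := fun c hc =>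
    Finset.mem_range_succ_iff.2 (Nat.log_mono_right (hρ c hc).2)
  have hfiber : ∀ j ∈ Finset.range (Nat.log 2 B + 1),
      (I.filter fun c => Nat.log 2 (ρ c) = j).card ≤ m / (2 ^ j + 2) + 1 := by
    intro j _
    refine card_le_of_le_abs_sub (N := N) (by positivity) (fun c hc => ?_)
      fun c hc c' hc' hne => ?_
    · simpa [I] using (Finset.mem_filter.1 hc).1
    · obtain ⟨hcI, rfl⟩ := Finset.mem_filter.1 hc
      obtain ⟨hc'I, hj⟩ := Finset.mem_filter.1 hc'
      exact_mod_cast hf.le_abs_sub hα (hρ c hcI).1 (hρ c' hc'I).1 hj.symm (hw c hcI) (he c hcI)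
        (hw c' hc'I) (he c' hc'I) hne
  have hI : I.card = m := by simp [I]
  have := sum_range_div_two_pow_add_two_add_lt hm
  have := Finset.card_eq_sum_card_fiberwise hband
  have := Finset.sum_le_sum hfiber
  rw [Finset.sum_add_distrib, Finset.sum_const, Finset.card_range, smul_eq_mul, mul_one] at this
  omega

end GoodCut

section Splice

/-- The word `tL⁻¹ x v[c₁, c₂] x tR`: the left tail is read leftwards from position `c₁ - 2`. -/
def splice (v : ℤ → A) (c₁ c₂ : ℤ) (x : A) (tL tR : ℕ → A) : ℤ → A := fun q =>
  if q < c₁ - 1 then tL (c₁ - 2 - q).toNat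
  else if q = c₁ - 1 then x
  else if q ≤ c₂ then v q
  else if q = c₂ + 1 then x
  else tR (q - (c₂ + 2)).toNat

variable {α : ℚ} {B : ℕ} {v : ℤ → A} {c₁ c₂ q : ℤ} {x : A} {tL tR : ℕ → A}

theorem splice_of_lt (hq : q < c₁ - 1) : splice v c₁ c₂ x tL tR q = tL (c₁ - 2 - q).toNat :=
  if_pos hq

theorem splice_sub_one : splice v c₁ c₂ x tL tR (c₁ - 1) = x := by
  simp [splice]

theorem splice_of_mem (h₁ : c₁ ≤ q) (h₂ : q ≤ c₂) : splice v c₁ c₂ x tL tR q = v q := by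
  unfold splice
  split_ifs <;> first | rfl | omega

theorem splice_add_one (hc : c₁ ≤ c₂ + 1) : splice v c₁ c₂ x tL tR (c₂ + 1) = x := by
  unfold splice
  split_ifs <;> first | rfl | omega

theorem splice_of_gt (hc : c₁ ≤ c₂ + 1) (hq : c₂ + 1 < q) :
    splice v c₁ c₂ x tL tR q = tR (q - (c₂ + 2)).toNat := by
  unfold splice
  split_ifs <;> first | rfl | omega

theorem splice_ne (hc : c₁ ≤ c₂ + 1) (htL : ∀ n, tL n ≠ x) (htR : ∀ n, tR n ≠ x)
    (hq : q < c₁ - 1 ∨ c₂ + 1 < q) : splice v c₁ c₂ x tL tR q ≠ x := by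
  rcases hq with hq | hq
  · rw [splice_of_lt hq]; exact htL _
  · rw [splice_of_gt hc hq]; exact htR _

theorem splice_comp_neg (hc : c₁ ≤ c₂ + 1) :
    (fun q => splice v c₁ c₂ x tL tR (-q)) = splice (fun q => v (-q)) (-c₂) (-c₁) x tR tL := by
  funext q
  simp only [splice]
  split_ifs <;> first | rfl | omega | (congr 1; omega)

theorem not_recZ_splice (hc : c₁ ≤ c₂ + 1) (htL : ∀ n, tL n ≠ x) (htR : ∀ n, tR n ≠ x) :
    ¬ RecZ (splice v c₁ c₂ x tL tR) [x] := by
  refine fun h => h ((Set.finite_Icc (c₁ - 1) (c₂ + 1)).subset fun q hq => ?_)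
  have hqx := (show OccursZ _ [x] q from hq).getElem 0 (by simp)
  simp only [List.getElem_singleton, Nat.cast_zero, add_zero] at hqx
  by_contra hmem
  rw [Set.mem_Icc, not_and_or, not_le, not_le] at hmem
  exact splice_ne hc htL htR (by omega) hqx.symm

theorem not_perOn_splice_of_gt (hc : c₁ ≤ c₂ + 1) (htR : HasNoFourthPowers tR) {i : ℤ} {ρ : ℕ}
    (hρ : 0 < ρ) (hi : c₂ + 1 < i) : ¬ PerOn (splice v c₁ c₂ x tL tR) i (i + 4 * ρ - 1) ρ := by
  refine fun hper => htR ρ (i - (c₂ + 2)).toNat hρ fun s hs => ?_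
  have := hper (i + s) (by omega) (by omega)
  rwa [splice_of_gt hc (by omega), splice_of_gt hc (by omega),
    show (i + s - (c₂ + 2)).toNat = (i - (c₂ + 2)).toNat + s by omega,
    show (i + s + ρ - (c₂ + 2)).toNat = (i - (c₂ + 2)).toNat + s + ρ by omega] at this

/-- A window of the splice through the right barrier `x` cannot reach `x`'s copy `ρ` letters
further, so it is a near-power window of `v` ending at `c₂` unless it reaches back across the
left barrier; in the latter case it covers `v[c₁, c₂]` and ends on the right barrier, since
one more letter would give the forbidden letter `tR 0`. -/
theorem perOn_splice_right_barrier (hα : 5 ≤ α) (hlong : (powLen α 1 : ℤ) ≤ c₂ - c₁)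
    (hB : c₂ - c₁ + 1 ≤ B) (hgood : GoodCut α B v c₂) (hx : x ≠ v (c₂ + 1))
    (htL : ∀ n, tL n ≠ x) (htR : ∀ n, tR n ≠ x)
    (hfirst : ∀ ρ : ℕ, 2 ≤ ρ → 3 * ρ ≤ c₂ - c₁ + 1 → PerOn v c₁ c₂ ρ → tR 0 ≠ v (c₂ + 2 - ρ))
    {i : ℤ} {ρ : ℕ} (hρ : 0 < ρ) (hper : PerOn (splice v c₁ c₂ x tL tR) i (i + powLen α ρ - 1) ρ)
    (hi : i ≤ c₂ + 1) (hi' : c₂ + 1 ≤ i + powLen α ρ - 1) :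
    i ≤ c₁ - 2 ∧ i + powLen α ρ - 1 ≤ c₂ + 1 := by
  set f := splice v c₁ c₂ x tL tR
  have h4 := four_mul_le_prePowLen hα ρ
  have hL := prePowLen_add hα ρ
  have hmid : ∀ q, c₁ ≤ q → q ≤ c₂ → f q = v q := fun q h₁ h₂ => splice_of_mem h₁ h₂
  have hfx : ∀ q, q < c₁ - 1 ∨ c₂ + 1 < q → f q ≠ x := fun q => splice_ne (by omega) htL htR
  have hx₁ : f (c₁ - 1) = x := splice_sub_one
  have hx₂ : f (c₂ + 1) = x := splice_add_one (by omega)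
  have htR₀ : f (c₂ + 2) = tR 0 := by simp [f, splice_of_gt (show c₁ ≤ c₂ + 1 by omega)]
  have hright : i + powLen α ρ - 1 < c₂ + 1 + ρ := by
    by_contra h
    exact hfx _ (by omega) ((hper (c₂ + 1) hi (by omega)).symm.trans hx₂)
  have hleft : c₁ - 1 - ρ < i := by
    by_contra h
    have := hper (c₁ - 1 - ρ) (by omega) (by omega)
    rw [sub_add_cancel, hx₁] at this
    exact hfx _ (by omega) this
  have hcut : c₂ + 1 - prePowLen α ρ < c₁ := by
    by_contra h
    have hw : PerOn v (c₂ + 1 - prePowLen α ρ) c₂ ρ := fun q hq hqb => by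
      rw [← hmid q (by omega) (by omega), ← hmid (q + ρ) (by omega) (by omega)]
      exact hper q (by omega) (by omega)
    refine hx ?_
    calc x = f (c₂ + 1) := hx₂.symm
      _ = f (c₂ + 1 - ρ) := by simpa using (hper (c₂ + 1 - ρ) (by omega) (by omega)).symm
      _ = v (c₂ + 1 - ρ) := hmid _ (by omega) (by omega)
      _ = v (c₂ + 1) := hgood ρ hρ (by omega) hw
  have hρ2 : 2 ≤ ρ := by
    by_contra h
    obtain rfl : ρ = 1 := by omega
    omega
  have hM : PerOn v c₁ c₂ ρ := fun q hq hqb => by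
    rw [← hmid q (by omega) (by omega), ← hmid (q + ρ) (by omega) (by omega)]
    exact hper q (by omega) (by omega)
  have hend : i + powLen α ρ - 1 ≤ c₂ + 1 := by
    by_contra h
    refine hfirst ρ hρ2 (by omega) hM ?_
    calc tR 0 = f (c₂ + 2) := htR₀.symm
      _ = f (c₂ + 2 - ρ) := by simpa using (hper (c₂ + 2 - ρ) (by omega) (by omega)).symm
      _ = v (c₂ + 2 - ρ) := hmid _ (by omega) (by omega)
  exact ⟨by omega, hend⟩

theorem noPowWindow_splice (hα : 5 ≤ α) (hv : NoPowWindow α v)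
    (hlong : (powLen α 1 : ℤ) ≤ c₂ - c₁) (hB : c₂ - c₁ + 1 ≤ B)
    (hgood₁ : GoodCut α B (fun q => v (-q)) (-c₁)) (hgood₂ : GoodCut α B v c₂)
    (hx₁ : x ≠ v (c₁ - 1)) (hx₂ : x ≠ v (c₂ + 1))
    (htL : HasNoFourthPowers tL) (htR : HasNoFourthPowers tR)
    (htLx : ∀ n, tL n ≠ x) (htRx : ∀ n, tR n ≠ x)
    (hfirst₁ : ∀ ρ : ℕ, 2 ≤ ρ → 3 * ρ ≤ c₂ - c₁ + 1 → PerOn v c₁ c₂ ρ → tL 0 ≠ v (c₁ - 2 + ρ))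
    (hfirst₂ : ∀ ρ : ℕ, 2 ≤ ρ → 3 * ρ ≤ c₂ - c₁ + 1 → PerOn v c₁ c₂ ρ → tR 0 ≠ v (c₂ + 2 - ρ)) :
    NoPowWindow α (splice v c₁ c₂ x tL tR) := by
  intro i ρ hρ hper
  have h5 := five_mul_le_powLen hα ρ
  have hc : c₁ ≤ c₂ + 1 := by omega
  have hper' : PerOn (splice (fun q => v (-q)) (-c₂) (-c₁) x tR tL)
      (-(i + powLen α ρ - 1)) (-(i + powLen α ρ - 1) + powLen α ρ - 1) ρ := by
    rw [← splice_comp_neg hc, show -(i + powLen α ρ - 1) + powLen α ρ - 1 = -i by ring]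
    exact hper.comp_neg
  have hfirst₁' : ∀ ρ : ℕ, 2 ≤ ρ → 3 * ρ ≤ -c₁ - -c₂ + 1 →
      PerOn (fun q => v (-q)) (-c₂) (-c₁) ρ → tL 0 ≠ v (-(-c₁ + 2 - ρ)) := by
    intro ρ h2 h3 hM
    have := hfirst₁ ρ h2 (by omega) (by simpa using hM.comp_neg)
    rwa [show c₁ - 2 + (ρ : ℤ) = -(-c₁ + 2 - ρ) by ring] at this
  have hR := perOn_splice_right_barrier hα hlong hB hgood₂ hx₂ htLx htRx hfirst₂ hρ hper
  have hL := perOn_splice_right_barrier (v := fun q => v (-q)) hα (by omega) (by omega) hgood₁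
    (by convert hx₁ using 2; ring) htRx htLx hfirst₁' hρ hper'
  by_cases hl : i + powLen α ρ - 1 < c₁ - 1
  · exact not_perOn_splice_of_gt (by omega) htL hρ
      (show -c₁ + 1 < -(i + powLen α ρ - 1) by omega) (hper'.mono le_rfl (by omega))
  by_cases hr : c₂ + 1 < i
  · exact not_perOn_splice_of_gt hc htR hρ hr (hper.mono le_rfl (by omega))
  by_cases hm : c₁ ≤ i ∧ i + powLen α ρ - 1 ≤ c₂
  · have hmid : ∀ q, c₁ ≤ q → q ≤ c₂ → splice v c₁ c₂ x tL tR q = v q :=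
      fun q h₁ h₂ => splice_of_mem h₁ h₂
    refine hv i ρ hρ fun q hq hqb => ?_
    rw [← hmid q (by omega) (by omega), ← hmid (q + ρ) (by omega) (by omega)]
    exact hper q hq hqb
  omega

end Splice

/-- The letters that the tails must avoid at their first position are well defined: by Fine and
Wilf, two such periods `ρ, ρ₀` give `v[c₁, c₂]` the period `gcd ρ ρ₀ ∣ ρ - ρ₀`. -/
theorem exists_forall_perOn_eq (v : ℤ → A) (c₁ c₂ : ℤ) : ∃ γ₁ γ₂ : A, ∀ ρ : ℕ, 2 ≤ ρ →
    3 * ρ ≤ c₂ - c₁ + 1 → PerOn v c₁ c₂ ρ → v (c₁ - 2 + ρ) = γ₁ ∧ v (c₂ + 2 - ρ) = γ₂ := by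
  by_cases hD : ∃ ρ₀ : ℕ, 2 ≤ ρ₀ ∧ 3 * ρ₀ ≤ c₂ - c₁ + 1 ∧ PerOn v c₁ c₂ ρ₀
  · obtain ⟨ρ₀, h2₀, h3₀, hM₀⟩ := hD
    refine ⟨v (c₁ - 2 + ρ₀), v (c₂ + 2 - ρ₀), fun ρ h2 h3 hM => ?_⟩
    have hg := hM.gcd hM₀ (by omega)
    have hd : ((ρ.gcd ρ₀ : ℕ) : ℤ) ∣ ρ - ρ₀ := dvd_sub
      (Int.natCast_dvd_natCast.2 (Nat.gcd_dvd_left _ _))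
      (Int.natCast_dvd_natCast.2 (Nat.gcd_dvd_right _ _))
    constructor
    · refine hg.apply_eq_of_dvd (by omega) (by omega) (by omega) (by omega) ?_
      rw [show c₁ - 2 + ρ₀ - (c₁ - 2 + ρ) = -(ρ - ρ₀ : ℤ) by ring]
      exact hd.neg_right
    · refine hg.apply_eq_of_dvd (by omega) (by omega) (by omega) (by omega) ?_
      rwa [show c₂ + 2 - ρ₀ - (c₂ + 2 - ρ) = (ρ - ρ₀ : ℤ) by ring]
  · exact ⟨v 0, v 0, fun ρ h2 h3 hM => absurd ⟨ρ, h2, h3, hM⟩ hD⟩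

theorem exists_mul_log_le (K : ℕ) : ∃ m, 720 * (Nat.log 2 (K + 2 * m) + 2) ≤ m := by
  refine ⟨720 * (K + 20), ?_⟩
  have : Nat.log 2 (K + 2 * (720 * (K + 20))) < K + 18 := by
    refine Nat.log_lt_of_lt_pow (by omega) ?_
    calc K + 2 * (720 * (K + 20)) < 2 ^ 18 * (K + 1) := by omega
      _ ≤ 2 ^ 18 * 2 ^ K := Nat.mul_le_mul_left _ Nat.lt_two_pow_self
      _ = 2 ^ (K + 18) := by ring
  omega

theorem statement12_general (k : ℕ) (hk : 3 ≤ k) (α : ℚ) (hα : 5 ≤ α)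
    (v : ℤ → Fin k) (hv : PowFreeZ α v)
    (w : List (Fin k)) (hwv : FactorZ v w) :
    ∃ (v' : ℤ → Fin k) (x : Fin k),
      PowFreeZ α v' ∧ FactorZ v' w ∧ ¬ RecZ v' [x] := by
  obtain ⟨i, hi⟩ := hwv
  rw [powFreeZ_iff_noPowWindow] at hv
  obtain ⟨m, hm⟩ := exists_mul_log_le (w.length + powLen α 1)
  obtain ⟨c₂, hc₂, hc₂', hgood₂⟩ := hv.exists_goodCut hα (i + w.length) hm
  obtain ⟨c₁, hc₁, hc₁', hgood₁⟩ := hv.comp_neg.exists_goodCut hα (powLen α 1 - i) hm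
  have hA : 3 ≤ ENat.card (Fin k) := by simpa using hk
  obtain ⟨x, hx₁, hx₂⟩ := ENat.exists_ne_ne_of_three_le hA (v (-c₁ - 1)) (v (c₂ + 1))
  obtain ⟨γ₁, γ₂, hγ⟩ := exists_forall_perOn_eq v (-c₁) c₂
  obtain ⟨tL, htL, htLx, htL₀⟩ := exists_hasNoFourthPowers hA x γ₁
  obtain ⟨tR, htR, htRx, htR₀⟩ := exists_hasNoFourthPowers hA x γ₂
  refine ⟨splice v (-c₁) c₂ x tL tR, x, powFreeZ_iff_noPowWindow.2 ?_,
    ⟨i, hi.congr fun j hj => (splice_of_mem (by omega) (by omega)).symm⟩,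
    not_recZ_splice (by omega) htLx htRx⟩
  exact noPowWindow_splice (B := w.length + powLen α 1 + 2 * m) hα hv (by omega) (by omega)
    (by simpa using hgood₁) hgood₂ hx₁ hx₂ htL htR htLx htRx
    (fun ρ h2 h3 hM => (hγ ρ h2 h3 hM).1 ▸ htL₀) (fun ρ h2 h3 hM => (hγ ρ h2 h3 hM).2 ▸ htR₀)

/-- Main Theorem: if `v` is a bi-infinite `α`-power-free word over
`Σ_k` and `w` a nonempty finite factor of `v`, then there are a bi-infinite
`α`-power-free word `v̄` and a letter `x` such that `w` is a factor of `v̄` and `x`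
has only finitely many occurrences in `v̄`. -/
theorem statement12 (k : ℕ) (hk : 3 ≤ k) (α : ℚ) (hα : 5 ≤ α)
    (v : ℤ → Fin k) (hv : PowFreeZ α v)
    (w : List (Fin k)) (hw : w ≠ []) (hwv : FactorZ v w) :
    ∃ (v' : ℤ → Fin k) (x : Fin k),
      PowFreeZ α v' ∧ FactorZ v' w ∧ ¬ RecZ v' [x] :=
  statement12_general k hk α hα v hv w hwv

end PowerFreeFormalization
end
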